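/- arXiv:2511.06650 — 7 statements merged into one kernel-verified Lean document; each statement's English description precedes it below -/
import Mathlib

section
/- For every irrational real number β and every ε > 0, there exists an infinite sequence x_1, x_2, ... of positive integers such that for every h in FS({x_n}) (the set of all finite sums of distinct elements of the sequence), the distance from βh to the nearest integer is less than ε. -/
/-!
Choose `x n > 0` with `‖β x n‖ < ε / 2 ^ (n + 1)`, which Dirichlet's approximation theorem
allows for every real `β`. Since `‖·‖` is subadditive, every finite sum of distinct terms
then has `‖β h‖` below the sum of a subseries of `∑ ε / 2 ^ (n + 1) = ε`.
-/

/-- Distance from a real number to the nearest integer. -/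
noncomputable def nid (x : ℝ) : ℝ := min (Int.fract x) (1 - Int.fract x)

theorem nid_eq_abs_sub_round (x : ℝ) : nid x = |x - round x| :=
  (abs_sub_round_eq_min x).symm

theorem nid_add_le (a b : ℝ) : nid (a + b) ≤ nid a + nid b := by
  simp only [nid_eq_abs_sub_round]
  calc |a + b - round (a + b)| ≤ |a + b - ↑(round a + round b)| := round_le _ _
    _ = |(a - round a) + (b - round b)| := by push_cast; ring_nf
    _ ≤ |a - round a| + |b - round b| := abs_add_le _ _

theorem nid_sum_le {ι : Type*} (s : Finset ι) (f : ι → ℝ) :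
    nid (∑ i ∈ s, f i) ≤ ∑ i ∈ s, nid (f i) :=
  Finset.le_sum_of_subadditive nid (by simp [nid_eq_abs_sub_round]) nid_add_le s f

theorem exists_pos_nat_nid_mul_lt (β : ℝ) {δ : ℝ} (hδ : 0 < δ) :
    ∃ q : ℕ, 0 < q ∧ nid (β * q) < δ := by
  obtain ⟨n, hn⟩ := exists_nat_one_div_lt hδ
  obtain ⟨q, hq, -, hqβ⟩ := Real.exists_nat_abs_mul_sub_round_le β n.succ_pos
  refine ⟨q, hq, ?_⟩
  calc nid (β * q) = |q * β - round (q * β)| := by rw [nid_eq_abs_sub_round, mul_comm]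
    _ ≤ 1 / ((n + 1 : ℕ) + 1) := hqβ
    _ ≤ 1 / (n + 1) := by gcongr; norm_num
    _ < δ := hn

theorem Finset.sum_div_two_div_two_pow_le (s : Finset ℕ) {a : ℝ} (ha : 0 ≤ a) :
    ∑ i ∈ s, a / 2 / 2 ^ i ≤ a :=
  ((summable_geometric_two' a).sum_le_tsum s fun _ _ => by positivity).trans_eq
    (tsum_geometric_two' a)

theorem raimi_FS_small_norm_general (β : ℝ) (ε : ℝ) (hε : 0 < ε) :
    ∃ x : ℕ → ℕ, (∀ n, 0 < x n) ∧
      ∀ s : Finset ℕ, s.Nonempty → nid (β * (∑ i ∈ s, x i : ℕ)) < ε := by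
  choose x hx_pos hx using fun n : ℕ =>
    exists_pos_nat_nid_mul_lt β (δ := ε / 2 / 2 ^ n) (by positivity)
  refine ⟨x, hx_pos, fun s hs => ?_⟩
  calc nid (β * (∑ i ∈ s, x i : ℕ)) = nid (∑ i ∈ s, β * x i) := by
        push_cast [Finset.mul_sum]; rfl
    _ ≤ ∑ i ∈ s, nid (β * x i) := nid_sum_le s _
    _ < ∑ i ∈ s, ε / 2 / 2 ^ i := Finset.sum_lt_sum_of_nonempty hs fun i _ => hx i
    _ ≤ ε := s.sum_div_two_div_two_pow_le hε.le

/-- For every irrational `β` and every `ε > 0`, there is an infinite sequence of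
positive integers all of whose finite sums `h` of distinct terms satisfy `‖βh‖ < ε`. -/
theorem raimi_FS_small_norm (β : ℝ) (hβ : Irrational β) (ε : ℝ) (hε : 0 < ε) :
    ∃ x : ℕ → ℕ, (∀ n, 0 < x n) ∧
      ∀ s : Finset ℕ, s.Nonempty → nid (β * (∑ i ∈ s, x i : ℕ)) < ε :=
  raimi_FS_small_norm_general β ε hε
end

section
/- Let β be irrational, and let P^{(1)}, …, P^{(f)} ∈ ℤ[x] be non-constant polynomials with P^{(j)}(0) = 0 for all j. Define v(n) = ({βP^{(1)}(n)}, …, {βP^{(f)}(n)}) ∈ 𝕋^f, the relation lattice R = {m ∈ ℤ^f : Σ_j m_j P^{(j)} = 0 in ℤ[x]}, and H' = closure of the subgroup of 𝕋^f generated by {v(n) : n ∈ ℕ}. Then the annihilator Ann(H') = {m ∈ ℤ^f : e^{2πi m·z} = 1 for all z ∈ H'} equals R. -/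
/-!
The character `z ↦ m · z` is a continuous homomorphism to a T₁ group, so it kills the closed
subgroup `H'` iff it kills each generator `v n`. On `v n` it takes the value `β · Q(n)` mod 1,
where `Q = Σ_j m_j P⁽ʲ⁾`; since `β` is irrational this vanishes iff `Q(n) = 0`, and a polynomial
vanishing at every natural number is zero.
-/

open Polynomial

theorem AddCircle.coe_sum_zsmul {p : ℝ} {ι : Type*} (s : Finset ι) (m : ι → ℤ) (x : ι → ℝ) :
    (↑(∑ j ∈ s, m j • x j) : AddCircle p) = ∑ j ∈ s, m j • (x j : AddCircle p) := by
  simp only [← AddCircle.coe_zsmul]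
  exact map_sum (QuotientAddGroup.mk' _) _ _

theorem Irrational.coe_mul_intCast_eq_zero_iff {β : ℝ} (hβ : Irrational β) (n : ℤ) :
    ((β * n : ℝ) : UnitAddCircle) = 0 ↔ n = 0 := by
  refine ⟨fun h => ?_, fun h => by simp [h]⟩
  obtain ⟨k, hk⟩ := (AddCircle.coe_eq_zero_iff 1).mp h
  by_contra hn
  exact (hβ.mul_intCast hn).ne_int k (by simpa using hk.symm)

theorem AddSubgroup.forall_mem_topologicalClosure_closure_map_eq_zero_iff
    {G H : Type*} [AddGroup G] [TopologicalSpace G] [IsTopologicalAddGroup G]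
    [AddGroup H] [TopologicalSpace H] [T1Space H] {φ : G →+ H} (hφ : Continuous φ) (S : Set G) :
    (∀ z ∈ (closure S).topologicalClosure, φ z = 0) ↔ ∀ s ∈ S, φ s = 0 := by
  refine ⟨fun h s hs => h s (le_topologicalClosure _ (subset_closure hs)), fun h => ?_⟩
  have hker : IsClosed (φ.ker : Set G) := isClosed_singleton.preimage hφ
  exact topologicalClosure_minimal _ ((closure_le _).mpr fun s hs => φ.mem_ker.mpr (h s hs)) hker

theorem Polynomial.eq_zero_of_forall_eval_natCast_eq_zero {R : Type*} [CommRing R] [IsDomain R]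
    [CharZero R] {Q : R[X]} (h : ∀ n : ℕ, Q.eval (n : R) = 0) : Q = 0 :=
  Q.eq_zero_of_infinite_isRoot <| (Set.infinite_range_of_injective Nat.cast_injective).mono <| by
    rintro _ ⟨n, rfl⟩; exact h n

section zsmulDot

variable {ι M : Type*} [Fintype ι] [AddCommGroup M]

def zsmulDot (m : ι → ℤ) : (ι → M) →+ M :=
  ∑ j, m j • Pi.evalAddMonoidHom (fun _ => M) j

theorem zsmulDot_apply (m : ι → ℤ) (z : ι → M) : zsmulDot m z = ∑ j, m j • z j := by
  simp [zsmulDot]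

theorem continuous_zsmulDot [TopologicalSpace M] [IsTopologicalAddGroup M] (m : ι → ℤ) :
    Continuous (zsmulDot (M := M) m) := by
  simp only [_root_.funext (zsmulDot_apply m)]
  fun_prop

theorem zsmulDot_coe_mul_eval (β : ℝ) (P : ι → ℤ[X]) (m : ι → ℤ) (n : ℤ) :
    zsmulDot m (fun j => ((β * ((P j).eval n : ℤ) : ℝ) : UnitAddCircle)) =
      ((β * ((∑ j, m j • P j).eval n : ℤ) : ℝ) : UnitAddCircle) := by
  rw [zsmulDot_apply, ← AddCircle.coe_sum_zsmul, eval_finsetSum]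
  congr 1
  push_cast [Finset.mul_sum]
  exact Finset.sum_congr rfl fun j _ => by rw [eval_smul, smul_eq_mul, zsmul_eq_mul]; push_cast; ring

end zsmulDot

theorem annihilator_eq_relation_lattice_general (f : ℕ)
    (β : ℝ) (hβ : Irrational β) (P : Fin f → Polynomial ℤ)
    (v : ℕ → (Fin f → UnitAddCircle))
    (hv : ∀ n j, v n j = ((β * ((P j).eval (n : ℤ) : ℤ) : ℝ) : UnitAddCircle))
    (H' : AddSubgroup (Fin f → UnitAddCircle))
    (hH' : H' = (AddSubgroup.closure (Set.range v)).topologicalClosure) :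
    {m : Fin f → ℤ | ∀ z ∈ H', (∑ j, m j • z j) = (0 : UnitAddCircle)} =
      {m : Fin f → ℤ | (∑ j, m j • P j) = 0} := by
  ext m
  simp_rw [Set.mem_ofPred_eq, ← zsmulDot_apply (M := UnitAddCircle), hH',
    AddSubgroup.forall_mem_topologicalClosure_closure_map_eq_zero_iff
      (continuous_zsmulDot (M := UnitAddCircle) m),
    Set.forall_mem_range, funext_iff.mpr (hv _), zsmulDot_coe_mul_eval,
    hβ.coe_mul_intCast_eq_zero_iff]
  exact ⟨eq_zero_of_forall_eval_natCast_eq_zero, fun h n => by rw [h, eval_zero]⟩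

/-- Proposition: the annihilator of the closed subgroup `H'` of `𝕋^f` generated by the
points `v(n) = ({βP⁽¹⁾(n)}, …, {βP⁽ᶠ⁾(n)})` equals the relation lattice
`R = {m ∈ ℤ^f : Σ_j m_j P⁽ʲ⁾ = 0}`.  (The character `z ↦ e^{2πi m·z}` is trivial at `z`
iff `Σ_j m_j z_j = 0` in `ℝ/ℤ`.) -/
theorem annihilator_eq_relation_lattice (f : ℕ) (hf : 0 < f)
    (β : ℝ) (hβ : Irrational β) (P : Fin f → Polynomial ℤ)
    (hdeg : ∀ j, 0 < (P j).natDegree) (h0 : ∀ j, (P j).eval 0 = 0)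
    (v : ℕ → (Fin f → UnitAddCircle))
    (hv : ∀ n j, v n j = ((β * ((P j).eval (n : ℤ) : ℤ) : ℝ) : UnitAddCircle))
    (H' : AddSubgroup (Fin f → UnitAddCircle))
    (hH' : H' = (AddSubgroup.closure (Set.range v)).topologicalClosure) :
    {m : Fin f → ℤ | ∀ z ∈ H', (∑ j, m j • z j) = (0 : UnitAddCircle)} =
      {m : Fin f → ℤ | (∑ j, m j • P j) = 0} :=
  annihilator_eq_relation_lattice_general f β hβ P v hv H' hH'
end

section
/- Let β be irrational, and let P^{(1)}, …, P^{(f)} ∈ ℤ[x] be non-constant polynomials with P^{(j)}(0) = 0 for all j. Let R be the lattice of integer vectors m with Σ_j m_j P^{(j)} ≡ 0, and H = {z ∈ 𝕋^f : m·z ∈ ℤ for all m ∈ R}. Then the sequence v(n) = ({βP^{(1)}(n)}, …, {βP^{(f)}(n)}) is equidistributed on H with respect to the Haar probability measure on H. -/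
/-!
Write `Q = ∑ j, m j • P j`. A character `m` that is non-trivial on `H` does not lie in `R`, so
`Q ≠ 0`, and `Q(0) = 0` makes `Q` non-constant; the Weyl sum of `v` for `m` is the Weyl sum of
`e(β Q(n))`. That these averages tend to `0` is Weyl's theorem, proved by induction on `deg Q`:
in degree one the sum is a geometric series with ratio `e(β c) ≠ 1` (as `β c` is irrational), and
van der Corput's inequality reduces degree `d` to the differences `β (Q(n + h) - Q(n))`, which
have degree `d - 1`.
-/

open Filter Finset Polynomial Topology ComplexConjugate AddCircle

lemma norm_sum_le_card {ι E : Type*} [SeminormedAddCommGroup E] (s : Finset ι) {a : ι → E}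
    (ha : ∀ i, ‖a i‖ ≤ 1) : ‖∑ i ∈ s, a i‖ ≤ #s := by
  simpa using (norm_sum_le s a).trans (s.sum_le_card_nsmul _ 1 fun i _ ↦ ha i)

lemma norm_sum_range_shift_sub_le {E : Type*} [SeminormedAddCommGroup E] {a : ℕ → E}
    (ha : ∀ n, ‖a n‖ ≤ 1) (N s : ℕ) :
    ‖∑ n ∈ range N, a (n + s) - ∑ n ∈ range N, a n‖ ≤ 2 * s := by
  have hsplit : ∑ n ∈ range N, a (n + s) - ∑ n ∈ range N, a n =
      ∑ n ∈ range s, a (n + N) - ∑ n ∈ range s, a n := by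
    have h₁ : ∑ n ∈ range (N + s), a n = ∑ n ∈ range s, a n + ∑ n ∈ range N, a (n + s) := by
      simp_rw [add_comm N s, sum_range_add, add_comm s]
    have h₂ : ∑ n ∈ range (N + s), a n = ∑ n ∈ range N, a n + ∑ n ∈ range s, a (n + N) := by
      simp_rw [sum_range_add, add_comm N]
    rw [sub_eq_sub_iff_add_eq_add, add_comm, ← h₁, h₂, add_comm]
  rw [hsplit]
  calc _ ≤ ‖∑ n ∈ range s, a (n + N)‖ + ‖∑ n ∈ range s, a n‖ := norm_sub_le _ _
    _ ≤ s + s := by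
      gcongr <;> simpa using norm_sum_le_card (range s) fun n ↦ ha _
    _ = 2 * s := by ring

lemma norm_mul_conj_le_one {x y : ℂ} (hx : ‖x‖ ≤ 1) (hy : ‖y‖ ≤ 1) : ‖x * conj y‖ ≤ 1 := by
  rw [norm_mul, Complex.norm_conj]
  exact mul_le_one₀ hx (norm_nonneg _) hy

def correlation (a : ℕ → ℂ) (h N : ℕ) : ℂ := ∑ n ∈ range N, a (n + h) * conj (a n)

section VanDerCorput

variable {a : ℕ → ℂ}

lemma norm_sum_shift_mul_conj_shift_le (ha : ∀ n, ‖a n‖ ≤ 1) (N : ℕ) {H r s : ℕ}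
    (hr : r < H) (hs : s < H) :
    ‖∑ n ∈ range N, a (n + r) * conj (a (n + s))‖ ≤
      (if r = s then (N : ℝ) else 0) + ∑ h ∈ Ico 1 H, ‖correlation a h N‖ + 2 * H := by
  wlog hsr : s ≤ r generalizing r s
  · have hconj : ∑ n ∈ range N, a (n + r) * conj (a (n + s)) =
        conj (∑ n ∈ range N, a (n + s) * conj (a (n + r))) := by
      simp [map_sum, mul_comm]
    rw [hconj, Complex.norm_conj]
    simpa only [eq_comm] using this hs hr (le_of_not_ge hsr)
  obtain ⟨d, rfl⟩ := Nat.exists_eq_add_of_le hsr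
  have hshift := norm_sum_range_shift_sub_le (a := fun k ↦ a (k + d) * conj (a k))
    (fun k ↦ norm_mul_conj_le_one (ha _) (ha _)) N s
  have hcorr : ‖∑ n ∈ range N, a (n + (s + d)) * conj (a (n + s))‖ ≤
      ‖correlation a d N‖ + 2 * s := by
    rw [correlation]
    simp only [← add_assoc]
    exact norm_le_norm_add_norm_sub' .. |>.trans (by gcongr)
  have hsH : (s : ℝ) ≤ H := by exact_mod_cast hs.le
  have hW : 0 ≤ ∑ h ∈ Ico 1 H, ‖correlation a h N‖ := sum_nonneg fun _ _ ↦ norm_nonneg _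
  rcases Nat.eq_zero_or_pos d with rfl | hd
  · have hdiag : ‖correlation a 0 N‖ ≤ N := by
      simpa [correlation] using
        norm_sum_le_card (range N) fun n ↦ norm_mul_conj_le_one (ha (n + 0)) (ha n)
    simp only [add_zero, if_true] at hcorr ⊢
    linarith
  · have hoff : ‖correlation a d N‖ ≤ ∑ h ∈ Ico 1 H, ‖correlation a h N‖ :=
      single_le_sum (f := fun h ↦ ‖correlation a h N‖) (fun _ _ ↦ norm_nonneg _)
        (mem_Ico.mpr ⟨hd, by omega⟩)
    rw [if_neg (by omega), zero_add]
    linarith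

lemma mul_norm_sum_le_norm_sum_window (ha : ∀ n, ‖a n‖ ≤ 1) (N H : ℕ) :
    H * ‖∑ n ∈ range N, a n‖ ≤ ‖∑ n ∈ range N, ∑ r ∈ range H, a (n + r)‖ + 2 * H ^ 2 := by
  have herror : ‖∑ r ∈ range H, (∑ n ∈ range N, a n - ∑ n ∈ range N, a (n + r))‖ ≤ 2 * H ^ 2 :=
    calc _ ≤ ∑ r ∈ range H, (2 * H : ℝ) := by
          refine (norm_sum_le _ _).trans (sum_le_sum fun r hr ↦ ?_)
          rw [norm_sub_rev]
          refine (norm_sum_range_shift_sub_le ha N r).trans ?_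
          gcongr
          exact (mem_range.mp hr).le
      _ = 2 * H ^ 2 := by simp only [sum_const, card_range, nsmul_eq_mul]; ring
  rw [sum_sub_distrib, sum_const, card_range, sum_comm] at herror
  calc (H : ℝ) * ‖∑ n ∈ range N, a n‖ = ‖H • ∑ n ∈ range N, a n‖ := by simp
    _ ≤ _ := norm_le_norm_add_norm_sub' .. |>.trans (by gcongr)

lemma sum_sq_norm_sum_window_le (ha : ∀ n, ‖a n‖ ≤ 1) (N H : ℕ) :
    ∑ n ∈ range N, ‖∑ r ∈ range H, a (n + r)‖ ^ 2 ≤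
      H * N + H ^ 2 * (∑ h ∈ Ico 1 H, ‖correlation a h N‖ + 2 * H) := by
  set W := ∑ h ∈ Ico 1 H, ‖correlation a h N‖
  have hexpand : ((∑ n ∈ range N, ‖∑ r ∈ range H, a (n + r)‖ ^ 2 : ℝ) : ℂ) =
      ∑ r ∈ range H, ∑ s ∈ range H, ∑ n ∈ range N, a (n + r) * conj (a (n + s)) := by
    simp_rw [Complex.ofReal_sum, Complex.ofReal_pow, ← Complex.mul_conj', map_sum,
      sum_mul_sum, sum_comm (s := range N)]
  calc ∑ n ∈ range N, ‖∑ r ∈ range H, a (n + r)‖ ^ 2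
      ≤ ‖((∑ n ∈ range N, ‖∑ r ∈ range H, a (n + r)‖ ^ 2 : ℝ) : ℂ)‖ := by
        rw [Complex.norm_real]; exact Real.le_norm_self _
    _ ≤ ∑ r ∈ range H, ∑ s ∈ range H, ‖∑ n ∈ range N, a (n + r) * conj (a (n + s))‖ := by
        rw [hexpand]
        exact (norm_sum_le _ _).trans (sum_le_sum fun r _ ↦ norm_sum_le _ _)
    _ ≤ ∑ r ∈ range H, ∑ s ∈ range H, ((if r = s then (N : ℝ) else 0) + W + 2 * H) :=
        sum_le_sum fun r hr ↦ sum_le_sum fun s hs ↦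
          norm_sum_shift_mul_conj_shift_le ha N (mem_range.mp hr) (mem_range.mp hs)
    _ = H * N + H ^ 2 * (W + 2 * H) := by
        simp only [sum_add_distrib, sum_ite_eq, mem_range, sum_const, card_range, nsmul_eq_mul]
        rw [sum_congr rfl fun r hr ↦ if_pos (mem_range.mp hr), sum_const, card_range, nsmul_eq_mul]
        ring

/-- Van der Corput's inequality, with crude error terms. -/
lemma sq_norm_sum_le (ha : ∀ n, ‖a n‖ ≤ 1) (N : ℕ) {H : ℕ} (hH : 0 < H) :
    ‖∑ n ∈ range N, a n‖ ^ 2 ≤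
      2 * N ^ 2 / H + 2 * N * ∑ h ∈ Ico 1 H, ‖correlation a h N‖ + 4 * H * N + 8 * H ^ 2 := by
  have hwindow := mul_norm_sum_le_norm_sum_window ha N H
  have hmoment := sum_sq_norm_sum_window_le ha N H
  set W := ∑ h ∈ Ico 1 H, ‖correlation a h N‖
  set S := ‖∑ n ∈ range N, a n‖
  set A := ‖∑ n ∈ range N, ∑ r ∈ range H, a (n + r)‖
  have hcauchySchwarz : A ^ 2 ≤ N * ∑ n ∈ range N, ‖∑ r ∈ range H, a (n + r)‖ ^ 2 := by
    refine (pow_le_pow_left₀ (norm_nonneg _) (norm_sum_le _ _) 2).trans ?_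
    simpa using sq_sum_le_card_mul_sum_sq (s := range N) (f := fun n ↦ ‖∑ r ∈ range H, a (n + r)‖)
  have hHpos : (0 : ℝ) < H := by exact_mod_cast hH
  have hsq : (H * S) ^ 2 ≤ 2 * A ^ 2 + 8 * H ^ 4 := by
    nlinarith [mul_nonneg hHpos.le (norm_nonneg (∑ n ∈ range N, a n)), sq_nonneg (A - 2 * H ^ 2)]
  have hA : A ^ 2 ≤ N * (H * N + H ^ 2 * (W + 2 * H)) :=
    hcauchySchwarz.trans (mul_le_mul_of_nonneg_left hmoment (Nat.cast_nonneg N))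
  rw [← mul_le_mul_iff_of_pos_left (pow_pos hHpos 2)]
  have hdiv : (H : ℝ) ^ 2 * (2 * N ^ 2 / H) = 2 * H * N ^ 2 := by field_simp
  rw [mul_add, mul_add, mul_add, hdiv]
  nlinarith

lemma sq_norm_average_le (ha : ∀ n, ‖a n‖ ≤ 1) {N H : ℕ} (hN : 0 < N) (hH : 0 < H) :
    ‖(∑ n ∈ range N, a n) / N‖ ^ 2 ≤
      2 / H + (2 * ∑ h ∈ Ico 1 H, ‖correlation a h N / N‖ + 4 * H / N + 8 * H ^ 2 / N ^ 2) := by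
  have hkey := sq_norm_sum_le ha N hH
  simp_rw [norm_div, Complex.norm_natCast, ← sum_div]
  rw [div_pow, div_le_iff₀ (by positivity)]
  refine hkey.trans_eq ?_
  field_simp
  ring

theorem tendsto_average_zero_of_tendsto_correlation (ha : ∀ n, ‖a n‖ ≤ 1)
    (hcorr : ∀ h, 0 < h → Tendsto (fun N : ℕ ↦ correlation a h N / N) atTop (𝓝 0)) :
    Tendsto (fun N : ℕ ↦ (∑ n ∈ range N, a n) / N) atTop (𝓝 0) := by
  rw [NormedAddGroup.tendsto_nhds_zero]
  intro ε hε
  obtain ⟨H, hH⟩ := exists_nat_gt (4 / ε ^ 2)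
  have hHpos' : (0 : ℝ) < H := (div_pos four_pos (pow_pos hε 2)).trans hH
  have hHpos : 0 < H := by exact_mod_cast hHpos'
  have hHε : 2 / (H : ℝ) < ε ^ 2 / 2 := by
    rw [div_lt_iff₀ (pow_pos hε 2)] at hH
    rw [div_lt_iff₀ hHpos']
    linarith
  have herror : Tendsto (fun N : ℕ ↦ 2 * ∑ h ∈ Ico 1 H, ‖correlation a h N / N‖
      + 4 * H / N + 8 * H ^ 2 / N ^ 2) atTop (𝓝 0) := by
    have hsum : Tendsto (fun N : ℕ ↦ ∑ h ∈ Ico 1 H, ‖correlation a h N / N‖) atTop (𝓝 0) := by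
      simpa using tendsto_finsetSum (Ico 1 H) fun h hh ↦ (hcorr h (mem_Ico.mp hh).1).norm
    have hsq : Tendsto (fun N : ℕ ↦ (8 * H ^ 2 / N ^ 2 : ℝ)) atTop (𝓝 0) :=
      ((tendsto_pow_atTop two_ne_zero).comp tendsto_natCast_atTop_atTop).const_div_atTop _
    simpa using ((hsum.const_mul 2).add (tendsto_const_div_atTop_nhds_zero_nat _)).add hsq
  filter_upwards [herror.eventually (gt_mem_nhds (by positivity : 0 < ε ^ 2 / 2)),
    eventually_gt_atTop 0] with N hNε hN
  refine lt_of_pow_lt_pow_left₀ 2 hε.le ?_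
  linarith [sq_norm_average_le ha hN hHpos]

end VanDerCorput

lemma coeff_taylor_of_natDegree_eq_succ {R : Type*} [CommRing R] {Q : R[X]} {n : ℕ}
    (hn : Q.natDegree = n + 1) (r : R) :
    (taylor r Q).coeff n = Q.coeff n + (n + 1) * r * Q.leadingCoeff := by
  have hdeg : (hasseDeriv n Q).natDegree < 2 := by
    have := natDegree_hasseDeriv_le Q n
    omega
  rw [taylor_coeff, eval_eq_sum_range' hdeg, sum_range_succ, sum_range_one, hasseDeriv_coeff,
    hasseDeriv_coeff, leadingCoeff, hn, add_comm 1 n, Nat.choose_succ_self_right]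
  simp only [zero_add, Nat.choose_self, Nat.cast_one, one_mul, pow_zero, mul_one, pow_one]
  push_cast
  ring

lemma natDegree_taylor_sub_self {R : Type*} [CommRing R] [NoZeroDivisors R] [CharZero R]
    {Q : R[X]} (hQ : 0 < Q.natDegree) {r : R} (hr : r ≠ 0) :
    (taylor r Q - Q).natDegree = Q.natDegree - 1 := by
  obtain ⟨n, hn⟩ := Nat.exists_eq_add_of_lt hQ
  rw [zero_add] at hn
  have hcoeff : (taylor r Q - Q).coeff n ≠ 0 := by
    rw [coeff_sub, coeff_taylor_of_natDegree_eq_succ hn, add_sub_cancel_left]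
    exact mul_ne_zero (mul_ne_zero (by exact_mod_cast n.succ_ne_zero) hr)
      (leadingCoeff_ne_zero.mpr (ne_zero_of_natDegree_gt hQ))
  rw [hn, Nat.add_sub_cancel]
  refine natDegree_eq_of_le_of_coeff_ne_zero (natDegree_le_pred (n := n + 1) ?_ ?_) hcoeff
  · exact (natDegree_sub_le _ _).trans (by rw [natDegree_taylor, max_self, hn])
  · rw [coeff_sub, ← hn, coeff_taylor_natDegree, leadingCoeff, sub_self]

lemma toCircle_ne_one_of_irrational {x : ℝ} (hx : Irrational x) :
    toCircle (x : UnitAddCircle) ≠ 1 := by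
  rw [← toCircle_zero, (injective_toCircle one_ne_zero).ne_iff, Ne, AddCircle.coe_eq_zero_iff]
  rintro ⟨k, hk⟩
  exact hx.ne_int k (by simpa using hk.symm)

lemma coe_toCircle_mul_conj {T : ℝ} (x y : AddCircle T) :
    (toCircle x : ℂ) * conj (toCircle y : ℂ) = toCircle (x - y) := by
  rw [← Circle.coe_inv_eq_conj, ← Circle.coe_mul, ← toCircle_neg, ← toCircle_add, sub_eq_add_neg]

lemma tendsto_average_geom_zero {z : ℂ} (hz : ‖z‖ ≤ 1) (hz1 : z ≠ 1) :
    Tendsto (fun N : ℕ ↦ (∑ n ∈ range N, z ^ n) / N) atTop (𝓝 0) := by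
  refine squeeze_zero_norm (fun N ↦ ?_) (tendsto_const_div_atTop_nhds_zero_nat (2 / ‖z - 1‖))
  rw [geom_sum_eq hz1, norm_div, norm_div, Complex.norm_natCast]
  gcongr
  calc ‖z ^ N - 1‖ ≤ ‖z ^ N‖ + ‖(1 : ℂ)‖ := norm_sub_le _ _
    _ ≤ 2 := by rw [norm_pow, norm_one]; linarith [pow_le_one₀ (norm_nonneg z) hz (n := N)]

lemma tendsto_average_toCircle_linear {β : ℝ} (hβ : Irrational β) {Q : ℤ[X]}
    (hQ : Q.natDegree = 1) :
    Tendsto (fun N : ℕ ↦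
      (∑ n ∈ range N, (toCircle ((β * Q.eval (n : ℤ) : ℝ) : UnitAddCircle) : ℂ)) / N)
      atTop (𝓝 0) := by
  set z := toCircle ((β * Q.coeff 1 : ℝ) : UnitAddCircle)
  have hc₁ : Q.coeff 1 ≠ 0 := by
    rw [← hQ]
    exact leadingCoeff_ne_zero.mpr (ne_zero_of_natDegree_gt (n := 0) (by omega))
  have hz : (z : ℂ) ≠ 1 := by
    rw [Ne, Circle.coe_eq_one]
    exact toCircle_ne_one_of_irrational (hβ.mul_intCast hc₁)
  have hterm : ∀ n : ℕ, (toCircle ((β * Q.eval (n : ℤ) : ℝ) : UnitAddCircle) : ℂ) =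
      toCircle ((β * Q.coeff 0 : ℝ) : UnitAddCircle) * (z : ℂ) ^ n := by
    intro n
    have hQn : Q.eval (n : ℤ) = Q.coeff 1 * n + Q.coeff 0 := by
      conv_lhs => rw [eq_X_add_C_of_natDegree_le_one hQ.le]
      simp only [eval_add, eval_mul, eval_C, eval_X]
    rw [hQn, ← Circle.coe_pow, ← toCircle_nsmul, ← Circle.coe_mul, ← toCircle_add,
      ← AddCircle.coe_nsmul, ← AddCircle.coe_add]
    push_cast
    ring_nf
  simp_rw [hterm, ← mul_sum, mul_div_assoc]
  simpa using (tendsto_average_geom_zero (Circle.norm_coe z).le hz).const_mul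
    (toCircle ((β * Q.coeff 0 : ℝ) : UnitAddCircle) : ℂ)

theorem tendsto_average_toCircle_polynomial {β : ℝ} (hβ : Irrational β) {Q : ℤ[X]}
    (hQ : 0 < Q.natDegree) :
    Tendsto (fun N : ℕ ↦
      (∑ n ∈ range N, (toCircle ((β * Q.eval (n : ℤ) : ℝ) : UnitAddCircle) : ℂ)) / N)
      atTop (𝓝 0) := by
  induction hd : Q.natDegree using Nat.strong_induction_on generalizing Q with
  | _ d ih =>
  obtain rfl | hd₁ := eq_or_ne d 1
  · exact tendsto_average_toCircle_linear hβ hd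
  refine tendsto_average_zero_of_tendsto_correlation (fun n ↦ (Circle.norm_coe _).le)
    fun h hh ↦ ?_
  have hdiff := natDegree_taylor_sub_self hQ (r := (h : ℤ)) (by exact_mod_cast hh.ne')
  refine (ih _ (by omega) (by omega) hdiff).congr fun N ↦ ?_
  simp only [correlation, coe_toCircle_mul_conj, ← AddCircle.coe_sub, eval_sub, taylor_eval,
    Int.cast_sub, mul_sub]
  push_cast
  rfl

theorem equidistributed_on_relation_subtorus_general (f : ℕ)
    (β : ℝ) (hβ : Irrational β) (P : Fin f → Polynomial ℤ)
    (h0 : ∀ j, (P j).eval 0 = 0)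
    (v : ℕ → (Fin f → UnitAddCircle))
    (hv : ∀ n j, v n j = ((β * ((P j).eval (n : ℤ) : ℤ) : ℝ) : UnitAddCircle))
    (R : Set (Fin f → ℤ)) (hR : R = {m | (∑ j, m j • P j) = 0})
    (H : Set (Fin f → UnitAddCircle))
    (hH : H = {z | ∀ m ∈ R, (∑ j, m j • z j) = (0 : UnitAddCircle)}) :
    ∀ m : Fin f → ℤ, (∃ z ∈ H, (∑ j, m j • z j) ≠ (0 : UnitAddCircle)) →
      Tendsto (fun N : ℕ =>
          (∑ n ∈ Finset.Icc 1 N, ((AddCircle.toCircle (∑ j, m j • v n j) : Circle) : ℂ)) / N)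
        atTop (nhds 0) := by
  rintro m ⟨z, hzH, hz⟩
  set Q := ∑ j, m j • P j
  have hQ : Q ≠ 0 := fun hQ ↦ hz (by subst hH hR; exact hzH m hQ)
  have hQdeg : 0 < Q.natDegree := natDegree_pos_iff_degree_pos.mpr
    (degree_pos_of_root (a := 0) hQ (by simp [Q, eval_finsetSum, h0]))
  have hv_sum : ∀ n : ℕ, ∑ j, m j • v n j = ((β * Q.eval (n : ℤ) : ℝ) : UnitAddCircle) := by
    intro n
    simp only [hv, ← AddCircle.coe_zsmul, Q, eval_finsetSum, eval_smul, smul_eq_mul,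
      Int.cast_sum, Int.cast_mul, mul_sum, ← QuotientAddGroup.mk_sum]
    congr! 2 with j
    simp only [zsmul_eq_mul]
    ring
  refine (tendsto_average_toCircle_polynomial hβ (Q := taylor 1 Q)
    (by rwa [natDegree_taylor])).congr fun N ↦ ?_
  rw [← Ico_add_one_right_eq_Icc, sum_Ico_eq_sum_range, Nat.add_sub_cancel]
  simp only [hv_sum, taylor_eval, add_comm 1]
  push_cast
  rfl

/-- Lemma: the sequence `v(n) = ({βP⁽¹⁾(n)}, …, {βP⁽ᶠ⁾(n)})` is equidistributed on the
relation-defined subtorus `H` with respect to Haar measure: by Weyl's criterion this means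
that for every character `z ↦ e^{2πi m·z}` of `𝕋^f` which is non-trivial on `H`, the averages
`(1/N) Σ_{n=1}^N e^{2πi m·v(n)}` tend to `0`. -/
theorem equidistributed_on_relation_subtorus (f : ℕ) (hf : 0 < f)
    (β : ℝ) (hβ : Irrational β) (P : Fin f → Polynomial ℤ)
    (hdeg : ∀ j, 0 < (P j).natDegree) (h0 : ∀ j, (P j).eval 0 = 0)
    (v : ℕ → (Fin f → UnitAddCircle))
    (hv : ∀ n j, v n j = ((β * ((P j).eval (n : ℤ) : ℤ) : ℝ) : UnitAddCircle))
    (R : Set (Fin f → ℤ)) (hR : R = {m | (∑ j, m j • P j) = 0})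
    (H : Set (Fin f → UnitAddCircle))
    (hH : H = {z | ∀ m ∈ R, (∑ j, m j • z j) = (0 : UnitAddCircle)}) :
    ∀ m : Fin f → ℤ, (∃ z ∈ H, (∑ j, m j • z j) ≠ (0 : UnitAddCircle)) →
      Tendsto (fun N : ℕ =>
          (∑ n ∈ Finset.Icc 1 N, ((AddCircle.toCircle (∑ j, m j • v n j) : Circle) : ℂ)) / N)
        atTop (nhds 0) :=
  equidistributed_on_relation_subtorus_general f β hβ P h0 v hv R hR H hH
end

section
/- Let U ⊆ 𝔽_q². Then Σ_{v ≠ 0} Σ_{λ ∈ 𝔽_q} |U ∩ ℓ_{v,λ}|² = (q−1)|U|(|U| + q), where the outer sum is over nonzero v ∈ 𝔽_q² and ℓ_{v,λ} = {p ∈ 𝔽_q² : p·v = λ}. -/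
/-!
`∑_λ |U ∩ ℓ_{v,λ}|²` counts the pairs `(p, p') ∈ U²` with `p·v = p'·v`. Swapping the sums, each
pair is counted once for every nonzero `v` orthogonal to `p - p'`: there are `q² - 1` of them
when `p = p'`, and `q - 1` otherwise, because a nonzero linear form on `𝔽_q²` is onto `𝔽_q` and
all its fibres have the same size.
-/

open Finset

theorem Finset.sum_sq_card_fiberwise_eq_card_filter {ι κ : Type*} [Fintype κ] [DecidableEq κ]
    (s : Finset ι) (g : ι → κ) :
    ∑ k, #{i ∈ s | g i = k} ^ 2 = #{x ∈ s ×ˢ s | g x.1 = g x.2} := by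
  rw [card_eq_sum_card_fiberwise (f := fun x => g x.1) (t := univ) (fun _ _ => mem_univ _)]
  refine sum_congr rfl fun k _ => ?_
  rw [sq, ← card_product, filter_filter, ← filter_product]
  congr 1 with x
  simp only [mem_filter, mem_product]
  grind

theorem AddMonoidHom.card_fiber_zero_mul_card_of_surjective {G M F : Type*} [AddGroup G]
    [Fintype G] [AddMonoid M] [Fintype M] [DecidableEq M] [FunLike F G M]
    [AddMonoidHomClass F G M] {f : F} (hf : Function.Surjective f) :
    #{g | f g = 0} * Fintype.card M = Fintype.card G :=
  calc #{g | f g = 0} * Fintype.card M = ∑ m : M, #{g | f g = m} := by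
        rw [mul_comm, ← smul_eq_mul, ← card_univ, ← sum_const]
        exact sum_congr rfl fun m _ => card_fiber_eq_of_mem_range f (hf 0) (hf m)
    _ = Fintype.card G := (card_eq_sum_card_fiberwise fun _ _ => mem_univ _).symm

section DotWith

variable {F : Type*} [Field F]

def dotWith (w : F × F) : F × F →+ F :=
  AddMonoidHom.mk' (fun v => w.1 * v.1 + w.2 * v.2) fun _ _ => by
    simp only [Prod.fst_add, Prod.snd_add]; ring

@[simp]
theorem dotWith_apply (w v : F × F) : dotWith w v = w.1 * v.1 + w.2 * v.2 := rfl

theorem dotWith_surjective {w : F × F} (hw : w ≠ 0) : Function.Surjective (dotWith w) := by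
  intro t
  by_cases h₁ : w.1 = 0
  · have h₂ : w.2 ≠ 0 := fun h₂ => hw (Prod.ext h₁ h₂)
    exact ⟨(0, t / w.2), by simp [mul_div_cancel₀ _ h₂]⟩
  · exact ⟨(t / w.1, 0), by simp [mul_div_cancel₀ _ h₁]⟩

variable [Fintype F] [DecidableEq F]

theorem card_dotWith_eq_zero {w : F × F} (hw : w ≠ 0) :
    #{v | dotWith w v = 0} = Fintype.card F := by
  have h := AddMonoidHom.card_fiber_zero_mul_card_of_surjective (dotWith_surjective hw)
  rw [Fintype.card_prod] at h
  exact Nat.eq_of_mul_eq_mul_right Fintype.card_pos h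

theorem card_ne_zero_dotWith_eq_zero (w : F × F) :
    #{v | v ≠ 0 ∧ dotWith w v = 0} =
      if w = 0 then Fintype.card F ^ 2 - 1 else Fintype.card F - 1 := by
  have h₀ : (0 : F × F) ∈ ({v | dotWith w v = 0} : Finset _) := by
    simp only [mem_filter, mem_univ, map_zero, and_self]
  rw [← filter_filter, filter_ne', filter_erase, card_erase_of_mem h₀]
  split_ifs with hw
  · subst hw
    simp [sq]
  · rw [card_dotWith_eq_zero hw]

end DotWith

/-- Second-moment identity for lines: for `U ⊆ 𝔽_q²`,
`Σ_{v ≠ 0} Σ_{λ} |U ∩ ℓ_{v,λ}|² = (q−1)|U|(|U|+q)`. -/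
theorem line_second_moment (F : Type*) [Field F] [Fintype F] [DecidableEq F]
    (U : Finset (F × F)) :
    ∑ v ∈ Finset.univ.filter (fun v : F × F => v ≠ 0), ∑ lam : F,
        ((U.filter (fun p => p.1 * v.1 + p.2 * v.2 = lam)).card) ^ 2 =
      (Fintype.card F - 1) * U.card * (U.card + Fintype.card F) := by
  calc _ = ∑ v ∈ univ.filter (fun v : F × F => v ≠ 0),
        #{x ∈ U ×ˢ U | x.1.1 * v.1 + x.1.2 * v.2 = x.2.1 * v.1 + x.2.2 * v.2} :=
        sum_congr rfl fun v _ => sum_sq_card_fiberwise_eq_card_filter U _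
    _ = ∑ x ∈ U ×ˢ U, #{v ∈ univ.filter (fun v : F × F => v ≠ 0) |
          x.1.1 * v.1 + x.1.2 * v.2 = x.2.1 * v.1 + x.2.2 * v.2} :=
        (sum_card_bipartiteAbove_eq_sum_card_bipartiteBelow _).symm
    _ = ∑ x ∈ U ×ˢ U, #{v | v ≠ 0 ∧ dotWith (x.1 - x.2) v = 0} := by
      refine sum_congr rfl fun x _ => ?_
      rw [filter_filter]
      congr 1 with v
      simp only [mem_filter, dotWith_apply, Prod.fst_sub, Prod.snd_sub]
      grind
    _ = ∑ p ∈ U, ∑ p' ∈ U,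
          if p = p' then Fintype.card F ^ 2 - 1 else Fintype.card F - 1 := by
      simp only [card_ne_zero_dotWith_eq_zero, sub_eq_zero, sum_product]
    _ = ∑ p ∈ U, ∑ p' ∈ U,
          ((Fintype.card F - 1) + if p = p' then Fintype.card F * (Fintype.card F - 1) else 0) := by
      have sq_sub_one (n : ℕ) : n ^ 2 - 1 = (n - 1) + n * (n - 1) := by
        cases n <;> simp [sq, Nat.add_mul]; ring
      refine sum_congr rfl fun p _ => sum_congr rfl fun p' _ => ?_
      split_ifs
      exacts [sq_sub_one _, (add_zero _).symm]
    _ = _ := by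
      simp only [sum_add_distrib, sum_const, smul_eq_mul]
      rw [sum_congr rfl fun p hp => by rw [sum_ite_eq, if_pos hp], sum_const, smul_eq_mul]
      ring
end

section
/- For all r, t ∈ ℕ there are constants α = α(r,t) > 0 (one may take α ≥ 2/((1 + t·2^{r+3})^r − 1)) and N_0 = N_0(r,t) such that for every N ≥ N_0 there is a partition ℤ_N = E_1 ∪ ⋯ ∪ E_r with the property: for every coloring ℤ_N = F_1 ∪ ⋯ ∪ F_t with t colors, there exist a single color class F_m and an element h ∈ ℤ_N such that |(F_m + h) ∩ E_i| ≥ αN for every i = 1, …, r. -/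
/-!
Let `K = 1 + t·2^(r+3)` and colour a residue `x` by its `K`-adic level: the largest `i < r`
with `K^i ∣ x.val`, where `x.val ∈ [0, N)` is the least representative. Given a `t`-colouring,
take a largest colour class `F`, so `t·|F| ≥ N`. A shift by `c·K^j` acts on `x.val` as plain
addition except for fewer than `c·K^j` elements near `N`; hence it keeps all lower levels
almost intact, while, for the best `c < K`, a `1/K` fraction of the multiples of `K^j` in
`F + h` become multiples of `K^(j+1)`. After `r - 1` such shifts `F + h` contains about
`N/(t·K^i)` multiples of `K^i` for every `i < r`, whereas only about `N/K^(i+1)` residues are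
multiples of `K^(i+1)`; since `K ≥ 16t`, the difference, which lies in level `i`, is still of
order `N/K^r`.
-/

open Finset

lemma Finset.exists_sum_le_card_nsmul {ι M : Type*} [AddCommMonoid M] [LinearOrder M]
    [IsOrderedAddMonoid M] {s : Finset ι} (hs : s.Nonempty) (f : ι → M) :
    ∃ i ∈ s, ∑ j ∈ s, f j ≤ #s • f i := by
  obtain ⟨i, hi, hmax⟩ := s.exists_max_image f hs
  exact ⟨i, hi, sum_le_card_nsmul s f (f i) hmax⟩

lemma Fintype.exists_card_le_card_mul_card_of_forall_exists_mem {α ι : Type*} [Fintype α]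
    [Fintype ι] [Nonempty ι] {F : ι → Finset α} (hF : ∀ x, ∃ i, x ∈ F i) :
    ∃ i, Fintype.card α ≤ Fintype.card ι * #(F i) := by
  classical
  obtain ⟨i, -, hi⟩ := exists_sum_le_card_nsmul univ_nonempty fun i => #(F i)
  refine ⟨i, ?_⟩
  calc Fintype.card α = #(univ.biUnion F) := by
        rw [← card_univ, (eq_univ_of_forall fun x => mem_biUnion.2 (by simpa using hF x))]
    _ ≤ ∑ i, #(F i) := card_biUnion_le
    _ ≤ Fintype.card ι * #(F i) := by simpa using hi

lemma Finset.card_filter_image_of_injective {α β : Type*} [DecidableEq β] {f : α → β}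
    (hf : Function.Injective f) (s : Finset α) (p : β → Prop) [DecidablePred p] :
    #{y ∈ s.image f | p y} = #{x ∈ s | p (f x)} := by
  rw [filter_image, card_image_of_injective _ hf]

lemma Nat.exists_lt_dvd_add {K : ℕ} (hK : 0 < K) (m : ℕ) : ∃ c < K, K ∣ m + c := by
  have : NeZero K := ⟨hK.ne'⟩
  refine ⟨(-(m : ZMod K)).val, ZMod.val_lt _, (ZMod.natCast_eq_zero_iff _ _).1 ?_⟩
  simp

namespace ZMod

variable {N : ℕ}

lemma val_add_natCast_of_lt {x : ZMod N} {d : ℕ} (h : x.val + d < N) :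
    (x + d).val = x.val + d := by
  have hd : (d : ZMod N).val = d := val_cast_of_lt (by omega)
  rw [val_add_of_lt (by rwa [hd]), hd]

section

variable [NeZero N]

lemma card_filter_le_val_add_le (S : Finset (ZMod N)) (d : ℕ) :
    #{x ∈ S | N ≤ x.val + d} ≤ d := by
  calc #{x ∈ S | N ≤ x.val + d} ≤ #(range d) := by
        refine card_le_card_of_injOn (fun x => x.val + d - N) (fun x hx => ?_)
          (fun x hx y hy hxy => ?_)
        · have := x.val_lt
          simp only [coe_filter, Set.mem_ofPred_eq, coe_range, Set.mem_Iio] at hx ⊢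
          omega
        · have := x.val_lt
          have := y.val_lt
          simp only [coe_filter, Set.mem_ofPred_eq] at hx hy hxy
          exact val_injective N (by omega)
    _ = d := card_range d

lemma card_le_card_filter_val_add_lt_add (S : Finset (ZMod N)) (d : ℕ) :
    #S ≤ #{x ∈ S | x.val + d < N} + d := by
  have := card_filter_le_val_add_le S d
  have := card_filter_add_card_filter_not (s := S) (p := fun x : ZMod N => x.val + d < N)
  simp only [not_lt] at this
  omega

lemma card_filter_dvd_val_le (e : ℕ) : #{x : ZMod N | e ∣ x.val} ≤ N / e + 1 := by
  calc #{x : ZMod N | e ∣ x.val} ≤ #(range (N / e + 1)) := by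
        refine card_le_card_of_injOn (fun x => x.val / e) (fun x _ => ?_)
          (fun x hx y hy hxy => ?_)
        · simpa [Nat.lt_succ_iff] using Nat.div_le_div_right x.val_lt.le
        · simp only [coe_filter, mem_univ, true_and, Set.mem_ofPred_eq] at hx hy hxy
          rw [← (val_injective N).eq_iff, ← Nat.div_mul_cancel hx, ← Nat.div_mul_cancel hy,
            hxy]
    _ = N / e + 1 := card_range _

lemma card_filter_dvd_val_le_image_add (S : Finset (ZMod N)) {e d : ℕ} (hed : e ∣ d) :
    #{x ∈ S | e ∣ x.val} ≤ #{x ∈ S.image (· + (d : ZMod N)) | e ∣ x.val} + d := by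
  rw [card_filter_image_of_injective (add_left_injective _)]
  calc #{x ∈ S | e ∣ x.val} ≤ #{x ∈ {x ∈ S | e ∣ x.val} | x.val + d < N} + d :=
        card_le_card_filter_val_add_lt_add _ d
    _ ≤ #{x ∈ S | e ∣ (x + (d : ZMod N)).val} + d := by
        gcongr 1
        refine card_le_card fun x hx => ?_
        simp only [mem_filter] at hx ⊢
        exact ⟨hx.1.1, val_add_natCast_of_lt hx.2 ▸ dvd_add hx.1.2 hed⟩

lemma exists_lt_card_filter_dvd_val_le_image_add (S : Finset (ZMod N)) {K e : ℕ} (hK : 0 < K) :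
    ∃ c < K, #{x ∈ S | e ∣ x.val} ≤
      K * #{x ∈ S.image (· + ((c * e : ℕ) : ZMod N)) | K * e ∣ x.val} + K * e := by
  simp only [card_filter_image_of_injective (add_left_injective _)]
  set g : ℕ → ℕ := fun c => #{x ∈ S | K * e ∣ (x + ((c * e : ℕ) : ZMod N)).val}
  have hcover : {x ∈ {x ∈ S | e ∣ x.val} | x.val + K * e < N} ⊆
      (range K).biUnion fun c => {x ∈ S | K * e ∣ (x + ((c * e : ℕ) : ZMod N)).val} := by
    intro x hx
    simp only [mem_filter] at hx
    obtain ⟨⟨hxS, m, hm⟩, hlt⟩ := hx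
    obtain ⟨c, hcK, hdvd⟩ := Nat.exists_lt_dvd_add hK m
    have hce : c * e ≤ K * e := Nat.mul_le_mul_right e hcK.le
    refine mem_biUnion.2 ⟨c, mem_range.2 hcK, mem_filter.2 ⟨hxS, ?_⟩⟩
    rw [val_add_natCast_of_lt (by omega), hm, mul_comm c, ← mul_add, mul_comm K]
    exact mul_dvd_mul_left e hdvd
  obtain ⟨c, hc, hmax⟩ := exists_sum_le_card_nsmul (nonempty_range_iff.2 hK.ne') g
  refine ⟨c, mem_range.1 hc, ?_⟩
  calc #{x ∈ S | e ∣ x.val} ≤ #{x ∈ {x ∈ S | e ∣ x.val} | x.val + K * e < N} + K * e :=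
        card_le_card_filter_val_add_lt_add _ _
    _ ≤ ∑ c ∈ range K, g c + K * e := by
        gcongr
        exact (card_le_card hcover).trans card_biUnion_le
    _ ≤ K * g c + K * e := by simpa using hmax

lemma exists_add_card_le_pow_mul_card_filter_dvd_val (S : Finset (ZMod N)) {K : ℕ} (hK : 0 < K) :
    ∀ n : ℕ, ∃ h : ZMod N, ∀ i ≤ n,
      #S ≤ K ^ i * #{x ∈ S.image (· + h) | K ^ i ∣ x.val} + n * K ^ (2 * n)
  | 0 => ⟨0, fun i hi => by simp [Nat.le_zero.1 hi]⟩
  | n + 1 => by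
    obtain ⟨h, ih⟩ := exists_add_card_le_pow_mul_card_filter_dvd_val S hK n
    set T := S.image (· + h)
    obtain ⟨c, hcK, hc⟩ := exists_lt_card_filter_dvd_val_le_image_add T (e := K ^ n) hK
    rw [← pow_succ'] at hc
    set d := c * K ^ n
    have hd : d ≤ K ^ (n + 1) := by rw [pow_succ']; exact Nat.mul_le_mul_right _ hcK.le
    have himage : S.image (· + (h + (d : ZMod N))) = T.image (· + (d : ZMod N)) := by
      simp only [T, image_image, Function.comp_def, add_assoc]
    have herr : K ^ (2 * n + 1) + n * K ^ (2 * n) ≤ (n + 1) * K ^ (2 * (n + 1)) := by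
      have h1 : K ^ (2 * n + 1) ≤ K ^ (2 * (n + 1)) := Nat.pow_le_pow_right hK (by omega)
      have h2 : K ^ (2 * n) ≤ K ^ (2 * (n + 1)) := Nat.pow_le_pow_right hK (by omega)
      nlinarith
    refine ⟨h + d, fun i hi => ?_⟩
    rw [himage]
    obtain hi | rfl := hi.lt_or_eq
    · replace hi := Nat.lt_succ_iff.1 hi
      have hKi : K ^ i * d ≤ K ^ (2 * n + 1) := by
        calc K ^ i * d ≤ K ^ n * K ^ (n + 1) :=
              Nat.mul_le_mul (Nat.pow_le_pow_right hK hi) hd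
          _ = K ^ (2 * n + 1) := by ring
      calc #S ≤ K ^ i * #{x ∈ T | K ^ i ∣ x.val} + n * K ^ (2 * n) := ih i hi
        _ ≤ K ^ i * (#{x ∈ T.image (· + (d : ZMod N)) | K ^ i ∣ x.val} + d) +
              n * K ^ (2 * n) := by
            gcongr
            exact card_filter_dvd_val_le_image_add T ((pow_dvd_pow K hi).mul_left c)
        _ ≤ _ := by nlinarith
    · calc #S ≤ K ^ n * #{x ∈ T | K ^ n ∣ x.val} + n * K ^ (2 * n) := ih n le_rfl
        _ ≤ K ^ n * (K * #{x ∈ T.image (· + (d : ZMod N)) | K ^ (n + 1) ∣ x.val} +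
              K ^ (n + 1)) + n * K ^ (2 * n) := by gcongr
        _ = K ^ (n + 1) * #{x ∈ T.image (· + (d : ZMod N)) | K ^ (n + 1) ∣ x.val} +
              (K ^ (2 * n + 1) + n * K ^ (2 * n)) := by ring
        _ ≤ _ := by gcongr

end

def adicLevel (K n : ℕ) (x : ZMod N) : ℕ := Nat.findGreatest (fun j => K ^ j ∣ x.val) n

lemma adicLevel_eq_or_pow_succ_dvd_val {K n i : ℕ} {x : ZMod N} (hi : i ≤ n)
    (hx : K ^ i ∣ x.val) : adicLevel K n x = i ∨ K ^ (i + 1) ∣ x.val := by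
  have hle : i ≤ adicLevel K n x := Nat.le_findGreatest hi hx
  obtain heq | hlt := hle.eq_or_lt
  · exact .inl heq.symm
  · exact .inr ((pow_dvd_pow K hlt).trans (Nat.findGreatest_spec (P := (K ^ · ∣ x.val)) hi hx))

variable [NeZero N]

def adicPartition (K n : ℕ) (i : Fin (n + 1)) : Finset (ZMod N) := {x | adicLevel K n x = i}

lemma existsUnique_mem_adicPartition (K n : ℕ) (x : ZMod N) :
    ∃! i, x ∈ adicPartition K n i :=
  ⟨⟨adicLevel K n x, Nat.lt_succ_of_le (Nat.findGreatest_le n)⟩, by simp [adicPartition],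
    fun i hi => Fin.ext (by simpa [adicPartition, eq_comm] using hi)⟩

lemma card_filter_pow_dvd_val_le_card_inter_adicPartition (K n : ℕ) (X : Finset (ZMod N))
    (i : Fin (n + 1)) :
    #{x ∈ X | K ^ (i : ℕ) ∣ x.val} ≤
      #(X ∩ adicPartition K n i) + (N / K ^ (i + 1 : ℕ) + 1) :=
  calc #{x ∈ X | K ^ (i : ℕ) ∣ x.val}
      ≤ #(X ∩ adicPartition K n i ∪ univ.filter (K ^ (i + 1 : ℕ) ∣ ·.val)) := by
        refine card_le_card fun x hx => ?_
        rw [mem_filter] at hx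
        simp only [mem_union, mem_inter, adicPartition, mem_filter, mem_univ, true_and]
        exact (adicLevel_eq_or_pow_succ_dvd_val (Nat.lt_succ_iff.1 i.isLt) hx.2).imp_left
          (⟨hx.1, ·⟩)
    _ ≤ _ := (card_union_le _ _).trans (by gcongr; exact card_filter_dvd_val_le _)

end ZMod

lemma four_mul_le_pow_mul_of_card_bounds {t K N n i s a b : ℕ} (ht : 0 < t) (hK : 16 * t ≤ K)
    (hN : (n + 1) * K ^ (2 * n + 2) ≤ N) (hi : i ≤ n) (hs : N ≤ t * s)
    (ha : s ≤ K ^ i * a + n * K ^ (2 * n)) (hb : a ≤ b + (N / K ^ (i + 1) + 1)) :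
    4 * N ≤ K ^ (n + 1) * b := by
  have hK0 : 0 < K := by omega
  have hKi : K ^ (i + 1) ≤ K ^ (n + 1) := Nat.pow_le_pow_right hK0 (by omega)
  have hKn : K ^ (n + 1) ≤ K ^ (2 * n + 2) := Nat.pow_le_pow_right hK0 (by omega)
  have hdiv : K ^ (i + 1) * (N / K ^ (i + 1)) ≤ N := Nat.mul_div_le N _
  have herr : K ^ (i + 1) + n * (K * K ^ (2 * n)) ≤ N := by
    have : K * K ^ (2 * n) ≤ K ^ (2 * n + 2) := by
      rw [← pow_succ']; exact Nat.pow_le_pow_right hK0 (by omega)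
    nlinarith
  have hKa : K ^ (i + 1) * a ≤ K ^ (i + 1) * b + N + K ^ (i + 1) := by
    nlinarith [Nat.mul_le_mul_left (K ^ (i + 1)) hb]
  have hKN : K * N ≤ t * (K ^ (i + 1) * a + n * (K * K ^ (2 * n))) := by
    rw [pow_succ]
    nlinarith [Nat.mul_le_mul_left K hs, Nat.mul_le_mul_left (K * t) ha]
  -- `K·N ≤ t·(K^(i+1)·b + 2N)` and `16t ≤ K` leave `14N ≤ K^(i+1)·b`
  have : t * (14 * N) ≤ t * (K ^ (i + 1) * b) := by nlinarith
  nlinarith [Nat.le_of_mul_le_mul_left this ht, Nat.mul_le_mul_right b hKi]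

lemma two_div_sub_one_mul_le {x N b : ℝ} (hx : 2 ≤ x) (hb : 0 ≤ b) (h : 4 * N ≤ x * b) :
    2 / (x - 1) * N ≤ b := by
  rw [div_mul_eq_mul_div, div_le_iff₀ (by linarith)]
  nlinarith

/-- Theorem 1.4 (cyclic case): for all `r, t ≥ 1` there are `α = α(r,t) > 0` (one may take
`α ≥ 2/((1+t·2^{r+3})^r − 1)`) and `N₀` such that for every `N ≥ N₀` there is a partition
`ℤ_N = E₁ ∪ ⋯ ∪ E_r` with: for every `t`-coloring `ℤ_N = F₁ ∪ ⋯ ∪ F_t` there are a color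
class `F_m` and `h ∈ ℤ_N` with `|(F_m + h) ∩ E_i| ≥ αN` for all `i`. -/
theorem raimi_cyclic (r t : ℕ) (hr : 0 < r) (ht : 0 < t) :
    ∃ α : ℝ, 0 < α ∧ 2 / (((1 + t * 2 ^ (r + 3) : ℝ)) ^ r - 1) ≤ α ∧
      ∃ N₀ : ℕ, ∀ N : ℕ, N₀ ≤ N →
        ∃ E : Fin r → Finset (ZMod N), (∀ x : ZMod N, ∃! i, x ∈ E i) ∧
          ∀ F : Fin t → Finset (ZMod N), (∀ x : ZMod N, ∃! m, x ∈ F m) →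
            ∃ (m : Fin t) (h : ZMod N), ∀ i : Fin r,
              α * N ≤ (((F m).image (fun x => x + h)) ∩ E i).card := by
  obtain ⟨n, rfl⟩ : ∃ n, r = n + 1 := ⟨r - 1, by omega⟩
  set K := 1 + t * 2 ^ (n + 1 + 3)
  have hKt : 16 * t ≤ K := by
    have : 2 ^ 4 ≤ 2 ^ (n + 1 + 3) := Nat.pow_le_pow_right two_pos (by omega)
    simp only [K]
    nlinarith
  have hK0 : 0 < K := by omega
  have hKr : (2 : ℝ) ≤ (K : ℝ) ^ (n + 1) := by
    exact_mod_cast (show 2 ≤ K by omega).trans (Nat.le_self_pow n.succ_ne_zero K)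
  refine ⟨2 / ((K : ℝ) ^ (n + 1) - 1), div_pos two_pos (by linarith), by simp [K],
    (n + 1) * K ^ (2 * n + 2), fun N hN => ?_⟩
  have : NeZero N := ⟨(lt_of_lt_of_le (Nat.mul_pos n.succ_pos (pow_pos hK0 _)) hN).ne'⟩
  have : Nonempty (Fin t) := ⟨⟨0, ht⟩⟩
  refine ⟨ZMod.adicPartition K n, ZMod.existsUnique_mem_adicPartition K n, fun F hF => ?_⟩
  obtain ⟨m, hm⟩ :=
    Fintype.exists_card_le_card_mul_card_of_forall_exists_mem fun x => (hF x).exists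
  rw [ZMod.card, Fintype.card_fin] at hm
  obtain ⟨h, hh⟩ := ZMod.exists_add_card_le_pow_mul_card_filter_dvd_val (F m) hK0 n
  refine ⟨m, h, fun i => ?_⟩
  have hi : (i : ℕ) ≤ n := Nat.lt_succ_iff.1 i.isLt
  have hb : 4 * N ≤ K ^ (n + 1) * #((F m).image (· + h) ∩ ZMod.adicPartition K n i) :=
    four_mul_le_pow_mul_of_card_bounds ht hKt hN hi hm (hh i hi)
      (ZMod.card_filter_pow_dvd_val_le_card_inter_adicPartition K n _ i)
  exact two_div_sub_one_mul_le hKr (Nat.cast_nonneg _) (by exact_mod_cast hb)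
end

section
/- Let r, t ∈ ℕ and let G = ℤ_N × G' where G' is a finite abelian group. Suppose E_1, …, E_r is a partition of ℤ_N such that for every t-coloring of ℤ_N there exist a color class C and h_1 ∈ ℤ_N with |(C + h_1) ∩ E_i| ≥ αN for all i. Then the partition Ẽ_i = E_i × G' of G satisfies: for every t-coloring G = F_1 ∪ ⋯ ∪ F_t, there exist a color class F_{m*} and h ∈ G with |(F_{m*} + h) ∩ Ẽ_i| ≥ (α/t)|G| for all i = 1, …, r. -/
/-!
Colour each `x ∈ ℤ_N` by a colour `m(x)` occupying at least `|G'|/t` points of the fibre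
`{x} × G'`. The hypothesis gives a colour `m` and a shift `h₁` with `|(C_m + h₁) ∩ E_i| ≥ αN`;
shifting by `(h₁, 0)`, each such `x` contributes its whole `m`-coloured fibre to
`(F_m + h) ∩ Ẽ_i`, so this set has at least `αN · |G'|/t` points.
-/

open Finset

section

variable {α β ι : Type*}

theorem Finset.exists_mem_iff_eq_of_existsUnique_mem {F : ι → Finset α}
    (hF : ∀ a, ∃! m, a ∈ F m) : ∃ c : α → ι, ∀ a m, a ∈ F m ↔ c a = m := by
  choose c hc using hF
  exact ⟨c, fun a m => ⟨fun h => ((hc a).2 m h).symm, fun h => h ▸ (hc a).1⟩⟩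

theorem Fintype.exists_card_le_mul_card_fiber [Fintype α] [Fintype ι] [Nonempty ι] [DecidableEq ι]
    (c : α → ι) : ∃ m, Fintype.card α ≤ Fintype.card ι * #{a | c a = m} := by
  obtain ⟨m, -, hm⟩ := exists_le_of_sum_le (s := univ) univ_nonempty
    (f := fun _ => Fintype.card α) (g := fun m => Fintype.card ι * #{a | c a = m}) <| by
    rw [← mul_sum, ← card_eq_sum_card_fiberwise (fun a _ => mem_univ (c a)), sum_const,
      card_univ, card_univ, smul_eq_mul]
  exact ⟨m, hm⟩

theorem Finset.card_mul_le_card_inter_product [DecidableEq α] [DecidableEq β] [Fintype β]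
    (S : Finset (α × β)) {T E : Finset α} (hTE : T ⊆ E) {k : ℝ}
    (hk : ∀ x ∈ T, k ≤ #{y | (x, y) ∈ S}) : #T * k ≤ #(S ∩ E ×ˢ univ) := by
  calc #T * k ≤ ∑ x ∈ T, (#{y | (x, y) ∈ S} : ℝ) := by
        simpa only [nsmul_eq_mul] using card_nsmul_le_sum T _ k hk
    _ = #(T.sigma fun x => ({y | (x, y) ∈ S} : Finset β)) := by rw [card_sigma]; push_cast; rfl
    _ ≤ #(S ∩ E ×ˢ univ) := by
        refine Nat.cast_le.mpr <| card_le_card_of_injOn (fun p => (p.1, p.2)) (fun p hp => ?_) ?_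
        · simp only [coe_sigma, Set.mem_sigma_iff, mem_coe, mem_filter, mem_univ, true_and] at hp
          simp [hp.2, hTE hp.1]
        · rintro ⟨x, y⟩ - ⟨x', y'⟩ - ⟨⟩
          rfl

end

theorem raimi_product_general (r t N : ℕ) [NeZero N] (G' : Type*) [AddCommGroup G'] [Fintype G']
    [DecidableEq G'] (ht : 0 < t) (α : ℝ)
    (E : Fin r → Finset (ZMod N))
    (hyp : ∀ C : Fin t → Finset (ZMod N), (∀ x : ZMod N, ∃! m, x ∈ C m) →
      ∃ (m : Fin t) (h₁ : ZMod N), ∀ i : Fin r,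
        α * N ≤ (((C m).image (fun x => x + h₁)) ∩ E i).card) :
    ∀ F : Fin t → Finset (ZMod N × G'), (∀ x : ZMod N × G', ∃! m, x ∈ F m) →
      ∃ (m : Fin t) (h : ZMod N × G'), ∀ i : Fin r,
        (α / t) * (N * Fintype.card G') ≤
          (((F m).image (fun x => x + h)) ∩ (E i ×ˢ Finset.univ)).card := by
  intro F hF
  obtain ⟨c, hc⟩ := exists_mem_iff_eq_of_existsUnique_mem hF
  have : Nonempty (Fin t) := ⟨⟨0, ht⟩⟩
  choose c₀ hc₀ using fun x : ZMod N =>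
    Fintype.exists_card_le_mul_card_fiber fun y : G' => c (x, y)
  obtain ⟨m, h₁, hm⟩ := hyp (fun m => {x | c₀ x = m}) fun x => ⟨c₀ x, by simp, by simp⟩
  refine ⟨m, (h₁, 0), fun i => ?_⟩
  have hfibre : ∀ x ∈ ({x | c₀ x = m} : Finset _).image (· + h₁) ∩ E i,
      (Fintype.card G' / t : ℝ) ≤ #{y | (x, y) ∈ (F m).image (· + (h₁, 0))} := by
    intro x hx
    simp only [mem_inter, mem_image, mem_filter, mem_univ, true_and] at hx
    obtain ⟨⟨x, rfl, rfl⟩, -⟩ := hx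
    rw [div_le_iff₀' (by exact_mod_cast ht)]
    simpa [sub_eq_add_neg, hc] using (Nat.cast_le (α := ℝ)).mpr (hc₀ x)
  calc (α / t) * (N * Fintype.card G') = α * N * (Fintype.card G' / t) := by ring
    _ ≤ #(({x | c₀ x = m} : Finset _).image (· + h₁) ∩ E i) * (Fintype.card G' / t) := by
        gcongr; exact hm i
    _ ≤ _ := card_mul_le_card_inter_product _ inter_subset_right hfibre

/-- Theorem 1.4 (general abelian case): if `E₁,…,E_r` is a partition of `ℤ_N` with the
Raimi property with constant `α`, then the partition `Ẽ_i = E_i × G'` of `G = ℤ_N × G'`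
has the Raimi property with constant `α/t`. -/
theorem raimi_product (r t N : ℕ) [NeZero N] (G' : Type*) [AddCommGroup G'] [Fintype G']
    [DecidableEq G'] (hr : 0 < r) (ht : 0 < t) (α : ℝ)
    (E : Fin r → Finset (ZMod N)) (hE : ∀ x : ZMod N, ∃! i, x ∈ E i)
    (hyp : ∀ C : Fin t → Finset (ZMod N), (∀ x : ZMod N, ∃! m, x ∈ C m) →
      ∃ (m : Fin t) (h₁ : ZMod N), ∀ i : Fin r,
        α * N ≤ (((C m).image (fun x => x + h₁)) ∩ E i).card) :
    ∀ F : Fin t → Finset (ZMod N × G'), (∀ x : ZMod N × G', ∃! m, x ∈ F m) →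
      ∃ (m : Fin t) (h : ZMod N × G'), ∀ i : Fin r,
        (α / t) * (N * Fintype.card G') ≤
          (((F m).image (fun x => x + h)) ∩ (E i ×ˢ Finset.univ)).card :=
  raimi_product_general r t N G' ht α E hyp
end

section
/- Let r, t, k ∈ ℕ. There exists a partition ℕ^k = E_1 ∪ ⋯ ∪ E_r such that for every coloring ℕ^k = F_1 ∪ ⋯ ∪ F_t with t colors, there exist a single color class F_m, an element x_0 ∈ ℕ, and an infinite sequence (x_n)_{n≥1} in ℕ such that for every h ∈ x_0 + FS({x_n}) and every i ∈ {1, …, r}, the set (F_m + h·𝟙_k) ∩ E_i is infinite, where 𝟙_k = (1,…,1) ∈ ℕ^k. -/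
/-!
Write numbers in base `b = 4r + 3` and call the `r` odd digits `2r+3+2i` (`i < r`) *solid*,
all other digits *transparent*; `E_i` collects the points whose coordinate sum has highest solid
digit `2r+3+2i`. The shift `h·𝟙_k` adds `k h` to the coordinate sum, and colouring `n ∈ ℕ` by the
colour of `(n, 0, …, 0)` reduces everything to one dimension.

Call `X ⊆ ℕ` thick if for every `e` it contains blocks `[c bᵉ, (c+1) bᵉ)` with transparent `c`
arbitrarily far out. If a thick set is covered by `A ∪ B` and `B` is not thick, then `B` misses
a point of every far transparent block of some size `b^e₁`; such blocks tile the far blocks of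
the thick set along transparent indices, so `A` meets all of them. By induction some colour
class `A` of `ℕ` has this density. Given a shift `d` with `bᵖ ≤ d < bᵖ⁺¹` and a label `i`, take
the sub-block just below `K bᵖ⁺³`, `K = 2r+3+2i`, inside a far transparent block: its index is
transparent (its digits are `K-1` and `b-1`), and for `n` in it, `n + d` carries into the digit
`K` at position `p+3` with only transparent digits above, so `n + d` has label `i`.
-/

namespace Raimi

section Digits

variable {b : ℕ}

def digit (b n σ : ℕ) : ℕ := n / b ^ σ % b

lemma digit_lt (hb : 0 < b) (n σ : ℕ) : digit b n σ < b := Nat.mod_lt _ hb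

lemma digit_eq_zero_of_lt_pow {n σ : ℕ} (h : n < b ^ σ) : digit b n σ = 0 := by
  rw [digit, Nat.div_eq_of_lt h, Nat.zero_mod]

lemma digit_of_lt {δ : ℕ} (h : δ < b) (σ : ℕ) : digit b δ σ = if σ = 0 then δ else 0 := by
  split_ifs with hσ
  · rw [digit, hσ, pow_zero, Nat.div_one, Nat.mod_eq_of_lt h]
  · exact digit_eq_zero_of_lt_pow (h.trans_le (Nat.le_self_pow hσ b))

lemma digit_div_pow (n u τ : ℕ) : digit b (n / b ^ u) τ = digit b n (τ + u) := by
  rw [digit, digit, Nat.div_div_eq_div_mul, ← pow_add, add_comm u]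

lemma digit_mul_pow_add_of_lt (hb : 0 < b) (c x : ℕ) {u σ : ℕ} (h : σ < u) :
    digit b (c * b ^ u + x) σ = digit b x σ := by
  have hsplit : c * b ^ u = c * b ^ (u - (σ + 1)) * b * b ^ σ := by
    rw [mul_assoc, mul_assoc, ← pow_succ', ← pow_add]
    congr 2
    omega
  rw [digit, digit, hsplit, add_comm, Nat.add_mul_div_right _ _ (pow_pos hb σ),
    Nat.add_mul_mod_self_right]

lemma digit_mul_pow_add_add (hb : 0 < b) (c : ℕ) {x u : ℕ} (hx : x < b ^ u) (τ : ℕ) :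
    digit b (c * b ^ u + x) (τ + u) = digit b c τ := by
  rw [← digit_div_pow, add_comm, Nat.add_mul_div_right _ _ (pow_pos hb u), Nat.div_eq_of_lt hx,
    zero_add]

def block (b e c : ℕ) : Set ℕ := Set.Ico (c * b ^ e) ((c + 1) * b ^ e)

lemma block_subset_block {e f c w : ℕ} (hw : w < b ^ f) :
    block b e (c * b ^ f + w) ⊆ block b (f + e) c := by
  have hlo : c * b ^ (f + e) ≤ (c * b ^ f + w) * b ^ e := by
    rw [pow_add, add_mul, mul_assoc]
    exact Nat.le_add_right _ _
  have hhi : (c * b ^ f + w + 1) * b ^ e ≤ (c + 1) * b ^ (f + e) := by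
    rw [pow_add, ← mul_assoc, add_one_mul c]
    exact Nat.mul_le_mul_right _ (by omega)
  exact fun q hq => ⟨hlo.trans hq.1, hq.2.trans_le hhi⟩

lemma exists_eq_mul_pow_add_of_mem_block {e f c w n : ℕ} (hn : n ∈ block b e (c * b ^ f + w)) :
    ∃ n₀ ∈ block b e w, n = c * b ^ (f + e) + n₀ := by
  have hstart : (c * b ^ f + w) * b ^ e = c * b ^ (f + e) + w * b ^ e := by
    rw [add_mul, mul_assoc, ← pow_add]
  obtain ⟨hlo, hhi⟩ := hn
  rw [add_one_mul, hstart] at hhi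
  rw [hstart] at hlo
  exact ⟨n - c * b ^ (f + e), ⟨by omega, by rw [add_one_mul]; omega⟩, by omega⟩

/-- `(K * b ^ 3 - 1) * b ^ (p - e)` indexes the `b ^ e`-block ending `b ^ p` below
`K * b ^ (p + 3)`. -/
lemma add_mem_block {e p d K n : ℕ} (hb : 0 < b) (hK : 0 < K) (hep : e ≤ p) (hpd : b ^ p ≤ d)
    (hdp : d < b ^ (p + 1)) (hn : n ∈ block b e ((K * b ^ 3 - 1) * b ^ (p - e))) :
    n + d ∈ block b (p + 3) K := by
  have hstart : (K * b ^ 3 - 1) * b ^ (p - e) * b ^ e = K * b ^ (p + 3) - b ^ p := by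
    rw [mul_assoc, ← pow_add, Nat.sub_add_cancel hep, Nat.sub_mul, one_mul, mul_assoc,
      ← pow_add, add_comm 3]
  obtain ⟨hlo, hhi⟩ := hn
  rw [add_one_mul, hstart] at hhi
  rw [hstart] at hlo
  have hpK : b ^ p ≤ K * b ^ (p + 3) :=
    (Nat.pow_le_pow_right hb (by omega)).trans (Nat.le_mul_of_pos_left _ hK)
  have hep' : b ^ e ≤ b ^ p := Nat.pow_le_pow_right hb hep
  have hp13 : b ^ (p + 1) ≤ b ^ (p + 3) := Nat.pow_le_pow_right hb (by omega)
  exact ⟨by omega, by rw [add_one_mul]; omega⟩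

end Digits

def base (r : ℕ) : ℕ := 4 * r + 3

lemma one_lt_base (r : ℕ) : 1 < base r := by
  unfold base
  omega

def IsTransparentDigit (r δ : ℕ) : Prop := δ ≤ 2 * r + 1 ∨ δ % 2 = 0

instance (r : ℕ) : DecidablePred (IsTransparentDigit r) :=
  fun δ => inferInstanceAs (Decidable (δ ≤ 2 * r + 1 ∨ δ % 2 = 0))

def IsTransparent (r n : ℕ) : Prop := ∀ σ, IsTransparentDigit r (digit (base r) n σ)

/-- The position bound `n` in `Nat.findGreatest` is harmless since `n < base r ^ n`; when `n`
has no solid digit the label is a junk value, still `< r`. -/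
def label (r n : ℕ) : ℕ :=
  (digit (base r) n (Nat.findGreatest (fun σ => ¬ IsTransparentDigit r (digit (base r) n σ)) n)
    - (2 * r + 3)) / 2

section Transparent

variable {r : ℕ}

lemma label_lt (hr : 0 < r) (n : ℕ) : label r n < r := by
  have := digit_lt (one_lt_base r).le n
    (Nat.findGreatest (fun σ => ¬ IsTransparentDigit r (digit (base r) n σ)) n)
  unfold label
  unfold base at *
  omega

lemma label_eq_of_digit {n s i : ℕ} (hs : digit (base r) n s = 2 * r + 3 + 2 * i)
    (habove : ∀ σ, s < σ → IsTransparentDigit r (digit (base r) n σ)) : label r n = i := by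
  have hsn : s ≤ n := by
    by_contra! h
    have := digit_eq_zero_of_lt_pow (h.trans (Nat.lt_pow_self (one_lt_base r)))
    omega
  have hpos : Nat.findGreatest (fun σ => ¬ IsTransparentDigit r (digit (base r) n σ)) n = s :=
    Nat.findGreatest_eq_iff.2 ⟨hsn, fun _ => by rw [hs, IsTransparentDigit]; omega,
      fun σ hσ _ => not_not.2 (habove σ hσ)⟩
  rw [label, hpos, hs]
  omega

lemma isTransparent_of_lt {δ : ℕ} (hδ : δ < base r) (h : IsTransparentDigit r δ) :
    IsTransparent r δ := by
  intro σ
  rw [digit_of_lt hδ]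
  split_ifs
  · exact h
  · exact Or.inr rfl

lemma IsTransparent.mul_pow_add {c w u : ℕ} (hc : IsTransparent r c) (hw : IsTransparent r w)
    (hwu : w < base r ^ u) : IsTransparent r (c * base r ^ u + w) := by
  have hb := (one_lt_base r).le
  intro σ
  rcases lt_or_ge σ u with h | h
  · rw [digit_mul_pow_add_of_lt hb c w h]
    exact hw σ
  · obtain ⟨τ, rfl⟩ := Nat.exists_eq_add_of_le' h
    rw [digit_mul_pow_add_add hb c hwu]
    exact hc τ

lemma isTransparent_zero : IsTransparent r 0 :=
  isTransparent_of_lt (one_lt_base r).pos (Or.inr rfl)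

lemma IsTransparent.mul_pow {c : ℕ} (hc : IsTransparent r c) (u : ℕ) :
    IsTransparent r (c * base r ^ u) := by
  simpa using hc.mul_pow_add isTransparent_zero (pow_pos (one_lt_base r).le u)

lemma isTransparent_pow (u : ℕ) : IsTransparent r (base r ^ u) := by
  simpa using (isTransparent_of_lt (δ := 1) (one_lt_base r) (Or.inl (by omega))).mul_pow u

lemma isTransparent_mul_pow_sub_one {K : ℕ} (hK0 : 0 < K) (hKb : K ≤ base r)
    (hK : IsTransparentDigit r (K - 1)) (j : ℕ) : IsTransparent r (K * base r ^ j - 1) := by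
  induction j with
  | zero => simpa using isTransparent_of_lt (by omega) hK
  | succ j ih =>
    have hb := one_lt_base r
    have hpos : 1 ≤ K * base r ^ j := Nat.mul_pos hK0 (pow_pos hb.le j)
    have hdigits : K * base r ^ (j + 1) - 1 = (K * base r ^ j - 1) * base r ^ 1 + (base r - 1) := by
      rw [pow_succ, ← mul_assoc, pow_one, Nat.sub_mul, one_mul]
      have : base r ≤ K * base r ^ j * base r := Nat.le_mul_of_pos_left _ hpos
      omega
    rw [hdigits]
    exact ih.mul_pow_add (isTransparent_of_lt (by omega) (Or.inr (by unfold base; omega)))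
      (by rw [pow_one]; omega)

lemma label_mul_pow_add {c s i ζ : ℕ} (hc : IsTransparent r c) (hi : i < r)
    (hζ : ζ ∈ block (base r) s (2 * r + 3 + 2 * i)) :
    label r (c * base r ^ (s + 1) + ζ) = i := by
  have hb := (one_lt_base r).le
  have hζlt : ζ < base r ^ (s + 1) := by
    refine hζ.2.trans_le ?_
    rw [pow_succ']
    exact Nat.mul_le_mul_right _ (by unfold base; omega)
  refine label_eq_of_digit (s := s) ?_ fun σ hσ => ?_
  · rw [digit_mul_pow_add_of_lt hb c ζ (Nat.lt_succ_self s), digit, Nat.div_eq_of_lt_le hζ.1 hζ.2,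
      Nat.mod_eq_of_lt (by unfold base; omega)]
  · obtain ⟨τ, rfl⟩ := Nat.exists_eq_add_of_le' hσ
    rw [digit_mul_pow_add_add hb c hζlt]
    exact hc τ

end Transparent

def IsThick (r : ℕ) (X : Set ℕ) : Prop :=
  ∀ e N, ∃ c ≥ N, IsTransparent r c ∧ block (base r) e c ⊆ X

def IsBlockDense (r : ℕ) (A : Set ℕ) (e : ℕ) : Prop :=
  ∀ f N, ∃ c ≥ N, IsTransparent r c ∧
    ∀ w < base r ^ f, IsTransparent r w → (A ∩ block (base r) e (c * base r ^ f + w)).Nonempty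

section Density

variable {r : ℕ}

lemma isThick_univ : IsThick r Set.univ := fun _ N =>
  ⟨base r ^ N, (Nat.lt_pow_self (one_lt_base r)).le, isTransparent_pow N, Set.subset_univ _⟩

lemma IsThick.nonempty {X : Set ℕ} (hX : IsThick r X) : X.Nonempty := by
  obtain ⟨c, -, -, hc⟩ := hX 0 0
  exact ⟨c, hc (by simp [block])⟩

lemma IsThick.exists_isBlockDense_or_isThick_diff {T : Set ℕ} (hT : IsThick r T) (A : Set ℕ) :
    (∃ e, IsBlockDense r A e) ∨ IsThick r (T \ A) := by
  refine or_iff_not_imp_right.2 fun hB => ?_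
  simp only [IsThick, not_forall, not_exists, not_and] at hB
  obtain ⟨e, N₀, hB⟩ := hB
  refine ⟨e, fun f N => ?_⟩
  obtain ⟨c, hcN, hc, hcT⟩ := hT (f + e) (max N N₀)
  refine ⟨c, le_of_max_le_left hcN, hc, fun w hw hwT => ?_⟩
  have hfar : N₀ ≤ c * base r ^ f + w :=
    (le_of_max_le_right hcN).trans
      ((Nat.le_mul_of_pos_right c (pow_pos (one_lt_base r).le f)).trans (Nat.le_add_right _ _))
  obtain ⟨q, hq, hqB⟩ := Set.not_subset.1 (hB _ hfar (hc.mul_pow_add hwT hw))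
  exact ⟨q, by_contra fun hqA => hqB ⟨hcT (block_subset_block hw hq), hqA⟩, hq⟩

lemma IsThick.exists_isBlockDense {ι : Type*} {T : Set ℕ} (hT : IsThick r T) (s : Finset ι)
    (A : ι → Set ℕ) (hcover : T ⊆ ⋃ i ∈ s, A i) : ∃ i ∈ s, ∃ e, IsBlockDense r (A i) e := by
  classical
  induction s using Finset.induction_on generalizing T with
  | empty =>
    obtain ⟨x, hx⟩ := hT.nonempty
    simpa using hcover hx
  | insert a s _ ih =>
    rcases hT.exists_isBlockDense_or_isThick_diff (A a) with h | h
    · exact ⟨a, Finset.mem_insert_self a s, h⟩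
    · obtain ⟨i, hi, he⟩ := ih h fun x hx =>
        ((Finset.set_biUnion_insert a s A ▸ hcover hx.1).resolve_left hx.2)
      exact ⟨i, Finset.mem_insert_of_mem hi, he⟩

lemma exists_isBlockDense_fiber {ι : Type*} [Finite ι] (color : ℕ → ι) :
    ∃ m e, IsBlockDense r (color ⁻¹' {m}) e := by
  have := Fintype.ofFinite ι
  obtain ⟨m, -, he⟩ := isThick_univ.exists_isBlockDense Finset.univ (fun m => color ⁻¹' {m})
    fun n _ => Set.mem_biUnion (Finset.mem_coe.2 (Finset.mem_univ (color n))) rfl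
  exact ⟨m, he⟩

lemma IsBlockDense.infinite_inter_label {A : Set ℕ} {e d i : ℕ} (hA : IsBlockDense r A e)
    (hd : base r ^ e ≤ d) (hi : i < r) : (A ∩ {n | label r (n + d) = i}).Infinite := by
  set b := base r with hbase
  set K := 2 * r + 3 + 2 * i
  have hb : 1 < b := one_lt_base r
  have hKb : K < b := by rw [hbase, base]; omega
  have hd0 : d ≠ 0 := (pow_pos (by omega) e).trans_le hd |>.ne'
  set p := Nat.log b d
  have hep : e ≤ p := (Nat.le_log_iff_pow_le hb hd0).2 hd
  have hw_lt : (K * b ^ 3 - 1) * b ^ (p - e) < b ^ (p - e + 4) := by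
    have : K * b ^ 3 < b ^ 4 := (Nat.mul_lt_mul_of_pos_right hKb (by positivity)).trans_eq
      (pow_succ' b 3).symm
    rw [pow_add, mul_comm (b ^ (p - e))]
    exact Nat.mul_lt_mul_of_pos_right (Nat.sub_lt_of_lt this) (by positivity)
  have hwT : IsTransparent r ((K * b ^ 3 - 1) * b ^ (p - e)) :=
    (isTransparent_mul_pow_sub_one (by omega) hKb.le (Or.inr (by omega)) 3).mul_pow (p - e)
  refine Set.infinite_of_forall_exists_gt fun N => ?_
  obtain ⟨c, hcN, hc, hcA⟩ := hA (p - e + 4) (N + 1)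
  obtain ⟨n, hnA, hn⟩ := hcA _ hw_lt hwT
  obtain ⟨n₀, hn₀, rfl⟩ := exists_eq_mul_pow_add_of_mem_block hn
  have hpos : p - e + 4 + e = p + 3 + 1 := by omega
  refine ⟨_, ⟨hnA, ?_⟩, ?_⟩
  · show label r (c * b ^ (p - e + 4 + e) + n₀ + d) = i
    rw [add_assoc, hpos]
    exact label_mul_pow_add hc hi (add_mem_block hb.le (by omega) hep
      (Nat.pow_log_le_self b hd0) (Nat.lt_pow_succ_log_self hb d) hn₀)
  · have := Nat.le_mul_of_pos_right c (pow_pos (one_lt_base r).pos (p - e + 4 + e))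
    omega

end Density

end Raimi

theorem raimi_higher_dimensional_general (r t k : ℕ) (hr : 0 < r) (hk : 0 < k) :
    ∃ E : Fin r → Set (Fin k → ℕ), (∀ p : Fin k → ℕ, ∃! i, p ∈ E i) ∧
      ∀ F : Fin t → Set (Fin k → ℕ), (∀ p : Fin k → ℕ, ∃! m, p ∈ F m) →
        ∃ (m : Fin t) (x₀ : ℕ) (x : ℕ → ℕ), 0 < x₀ ∧ (∀ n, 0 < x n) ∧
          ∀ h : ℕ, (∃ s : Finset ℕ, s.Nonempty ∧ h = x₀ + ∑ n ∈ s, x n) →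
            ∀ i : Fin r,
              Set.Infinite (((fun p : Fin k → ℕ => p + fun _ => h) '' F m) ∩ E i) := by
  classical
  refine ⟨fun i => {q | Raimi.label r (∑ j, q j) = i},
    fun q => ⟨⟨_, Raimi.label_lt hr _⟩, rfl, fun i hi => Fin.ext hi.symm⟩, fun F hF => ?_⟩
  let axis (n : ℕ) : Fin k → ℕ := Pi.single ⟨0, hk⟩ n
  choose color hcolor using fun n => (hF (axis n)).exists
  obtain ⟨m, e, hdense⟩ := Raimi.exists_isBlockDense_fiber (r := r) color
  have hpos : 0 < Raimi.base r ^ e := pow_pos (Raimi.one_lt_base r).le e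
  refine ⟨m, Raimi.base r ^ e, fun _ => Raimi.base r ^ e, hpos, fun _ => hpos, ?_⟩
  rintro h ⟨s, -, rfl⟩ i
  set h := Raimi.base r ^ e + ∑ n ∈ s, Raimi.base r ^ e
  have hd : Raimi.base r ^ e ≤ k * h := (Nat.le_add_right _ _).trans (Nat.le_mul_of_pos_left h hk)
  have hsum (n : ℕ) : ∑ j, (axis n + fun _ : Fin k => h) j = n + k * h := by
    simp [axis, Finset.sum_add_distrib]
  have hinj : Function.Injective fun n => axis n + fun _ : Fin k => h :=
    fun a a' haa' => by simpa [axis] using congrFun haa' ⟨0, hk⟩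
  refine ((hdense.infinite_inter_label hd i.isLt).image hinj.injOn).mono ?_
  rintro _ ⟨n, ⟨hn, hlabel⟩, rfl⟩
  have hn : color n = m := hn
  refine ⟨⟨axis n, hn ▸ hcolor n, rfl⟩, ?_⟩
  simpa only [Set.mem_ofPred_eq, hsum] using hlabel

/-- Theorem 1.2 (higher-dimensional Raimi with diagonal shifts): there is a partition
`ℕ^k = E₁ ∪ ⋯ ∪ E_r` such that for every `t`-coloring `ℕ^k = F₁ ∪ ⋯ ∪ F_t` there are a
color class `F_m`, `x₀ ∈ ℕ` and an infinite sequence `(x_n)` of positive integers such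
that for every `h ∈ x₀ + FS({x_n})` and every `i`, `(F_m + h·𝟙_k) ∩ E_i` is infinite. -/
theorem raimi_higher_dimensional (r t k : ℕ) (hr : 0 < r) (ht : 0 < t) (hk : 0 < k) :
    ∃ E : Fin r → Set (Fin k → ℕ), (∀ p : Fin k → ℕ, ∃! i, p ∈ E i) ∧
      ∀ F : Fin t → Set (Fin k → ℕ), (∀ p : Fin k → ℕ, ∃! m, p ∈ F m) →
        ∃ (m : Fin t) (x₀ : ℕ) (x : ℕ → ℕ), 0 < x₀ ∧ (∀ n, 0 < x n) ∧
          ∀ h : ℕ, (∃ s : Finset ℕ, s.Nonempty ∧ h = x₀ + ∑ n ∈ s, x n) →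
            ∀ i : Fin r,
              Set.Infinite (((fun p : Fin k → ℕ => p + fun _ => h) '' F m) ∩ E i) :=
  raimi_higher_dimensional_general r t k hr hk
end
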